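/- For every α ∈ (0,2] and every f ∈ C^∞(𝕋^d) with mean zero there exists C > 0 (depending only on f, d, α) such that sup_{n ≥ 1} sup_{x∈ℤ_n^d} n^{d/α} |k_n(x)| ≤ C, i.e. |k_n(x)| ≤ C n^{−d/α} for all n and all x ∈ ℤ_n^d. -/

import Mathlib

open MeasureTheory Filter Finset
open scoped BigOperators Topology Real

noncomputable section

/-- `e^{2πi t}`. -/
def e2pi (t : ℝ) : ℂ := Complex.exp (2 * (Real.pi : ℂ) * Complex.I * (t : ℂ))

/-- The integers in `[−n/2, n/2)`, a complete residue system mod `n`. -/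
def boxZ (n : ℕ) : Finset ℤ := Finset.Ico (-((n : ℤ) / 2)) ((n : ℤ) - (n : ℤ) / 2)

/-- The discrete torus `ℤ_n^d = [−n/2, n/2]^d ∩ ℤ^d` (a complete residue system mod `n`). -/
def boxZd (d n : ℕ) : Finset (Fin d → ℤ) := Fintype.piFinset fun _ => boxZ n

/-- Dot product of two integer vectors, as a real number. -/
def dotZ {d : ℕ} (x z : Fin d → ℤ) : ℝ := ∑ i, (x i : ℝ) * (z i : ℝ)

/-- Dot product `z · x` of an integer vector with a real vector. -/
def dotR {d : ℕ} (z : Fin d → ℤ) (x : Fin d → ℝ) : ℝ := ∑ i, (z i : ℝ) * x i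

/-- The squared Euclidean norm `‖z‖²` of an integer vector. -/
def nsq {d : ℕ} (z : Fin d → ℤ) : ℝ := ∑ i, ((z i : ℝ)) ^ 2

/-- The eigenvalue `λ_w = −4 ∑_i sin²(π w_i/n)` of the discrete Laplacian on `ℤ_n^d`. -/
def lambdaN (d n : ℕ) (z : Fin d → ℤ) : ℝ := -4 * ∑ i, Real.sin (Real.pi * (z i : ℝ) / n) ^ 2

/-- The normalizing constant `c_n = 4π² n^{d − d/α − 2}`. -/
def cN (d : ℕ) (α : ℝ) (n : ℕ) : ℝ := 4 * Real.pi ^ 2 * (n : ℝ) ^ ((d : ℝ) - (d : ℝ) / α - 2)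

/-- The point `y/n ∈ 𝕋_n^d ⊂ 𝕋^d` associated with `y ∈ ℤ_n^d`. -/
def tor {d : ℕ} (n : ℕ) (y : Fin d → ℤ) : Fin d → ℝ := fun i => (y i : ℝ) / n

/-- `f ∈ C^∞(𝕋^d)` with mean zero, modelled as a smooth `ℤ^d`-periodic function on `ℝ^d`
with zero integral over a fundamental domain. -/
def IsSmoothPeriodicMeanZero {d : ℕ} (f : (Fin d → ℝ) → ℝ) : Prop :=
  ContDiff ℝ (⊤ : ℕ∞) f ∧ (∀ (x : Fin d → ℝ) (z : Fin d → ℤ), f (x + fun i => (z i : ℝ)) = f x) ∧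
    (∫ x in Set.Icc (0 : Fin d → ℝ) 1, f x) = 0

/-- Fourier coefficient `f̂(z) = ∫_{𝕋^d} f(x) e^{−2πi z·x} dx`. -/
def fHat {d : ℕ} (f : (Fin d → ℝ) → ℝ) (z : Fin d → ℤ) : ℂ :=
  ∫ x in Set.Icc (0 : Fin d → ℝ) 1, (f x : ℂ) * e2pi (-(dotR z x))

/-- Discrete Fourier coefficient `f̂_n(z) = n^{−d} ∑_{w∈𝕋_n^d} f(w) e^{2πi w·z}`. -/
def fHatN {d : ℕ} (f : (Fin d → ℝ) → ℝ) (n : ℕ) (z : Fin d → ℤ) : ℂ :=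
  ((n : ℂ) ^ d)⁻¹ * ∑ y ∈ boxZd d n, (f (tor n y) : ℂ) * e2pi (dotZ y z / n)

/-- `R_n(w) = ∫_{B(w,1/(2n))} (f(u) − f(w)) du`, `B` the ball in the `ℓ^∞` metric. -/
def Rn {d : ℕ} (f : (Fin d → ℝ) → ℝ) (n : ℕ) (w : Fin d → ℝ) : ℝ :=
  ∫ u in Set.Icc (fun i => w i - 1 / (2 * n)) (fun i => w i + 1 / (2 * n)), (f u - f w)

/-- `l_n(x) = −(c_n/n^{2d}) ∑_{w∈𝕋_n^d} f(w) ∑_{z∈ℤ_n^d∖{0}} χ_{−z}(x) χ_{−z}(nw)/λ_z`. -/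
def lN {d : ℕ} (f : (Fin d → ℝ) → ℝ) (α : ℝ) (n : ℕ) (x : Fin d → ℤ) : ℂ :=
  -((cN d α n / (n : ℝ) ^ (2 * d) : ℝ) : ℂ) * ∑ y ∈ boxZd d n, (f (tor n y) : ℂ) *
    ∑ z ∈ (boxZd d n).erase 0, e2pi (-(dotZ x z + dotZ y z) / n) / ((lambdaN d n z : ℝ) : ℂ)

/-- `C_n(x) = −(c_n/n^{d}) ∑_{w∈𝕋_n^d} R_n(w) ∑_{z∈ℤ_n^d∖{0}} χ_{−z}(x) χ_{−z}(nw)/λ_z`. -/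
def cnF {d : ℕ} (f : (Fin d → ℝ) → ℝ) (α : ℝ) (n : ℕ) (x : Fin d → ℤ) : ℂ :=
  -((cN d α n / (n : ℝ) ^ d : ℝ) : ℂ) * ∑ y ∈ boxZd d n, (Rn f n (tor n y) : ℂ) *
    ∑ z ∈ (boxZd d n).erase 0, e2pi (-(dotZ x z + dotZ y z) / n) / ((lambdaN d n z : ℝ) : ℂ)

/-- `k_n = l_n + C_n`. -/
def kN {d : ℕ} (f : (Fin d → ℝ) → ℝ) (α : ℝ) (n : ℕ) (x : Fin d → ℤ) : ℂ :=
  lN f α n x + cnF f α n x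

/-- The limiting field `(−Δ)^{−1}f(x) = ∑_{z∈ℤ^d∖{0}} ‖z‖^{−2} f̂(z) e^{−2πi z·x}`. -/
def contField {d : ℕ} (f : (Fin d → ℝ) → ℝ) (x : Fin d → ℝ) : ℂ :=
  ∑' z : {z : Fin d → ℤ // z ≠ 0},
    e2pi (-(dotR (z : Fin d → ℤ) x)) / ((nsq (z : Fin d → ℤ) : ℝ) : ℂ) * fHat f (z : Fin d → ℤ)



set_option maxHeartbeats 1000000

lemma e2pi_add (s t : ℝ) : e2pi (s + t) = e2pi s * e2pi t := by
  unfold e2pi; rw [← Complex.exp_add]; push_cast; ring_nf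

lemma e2pi_abs (t : ℝ) : norm (e2pi t) = 1 := by
  unfold e2pi
  rw [Complex.norm_exp]
  norm_num [Complex.mul_re, Complex.mul_im]

lemma e2pi_int (m : ℤ) : e2pi (m : ℝ) = 1 := by
  unfold e2pi
  have : 2 * (Real.pi : ℂ) * Complex.I * ((m : ℝ) : ℂ) = (m : ℤ) * (2 * Real.pi * Complex.I) := by
    push_cast; ring
  rw [this, Complex.exp_int_mul_two_pi_mul_I]

lemma e2pi_eq (t : ℝ) : e2pi t = Complex.cos (2 * Real.pi * t) + Complex.sin (2 * Real.pi * t) * Complex.I := by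
  unfold e2pi
  rw [← Complex.exp_mul_I]
  ring_nf

lemma e2pi_sub_one_abs (t : ℝ) : norm (e2pi t - 1) = 2 * |Real.sin (Real.pi * t)| := by
  have h : e2pi t - 1 = ((Real.cos (2 * Real.pi * t) - 1 : ℝ) : ℂ) + ((Real.sin (2 * Real.pi * t) : ℝ) : ℂ) * Complex.I := by
    rw [e2pi_eq]; push_cast [Complex.ofReal_cos, Complex.ofReal_sin]; ring
  rw [h, Complex.norm_add_mul_I]
  have h2 : (Real.cos (2 * Real.pi * t) - 1) ^ 2 + Real.sin (2 * Real.pi * t) ^ 2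
      = (2 * |Real.sin (Real.pi * t)|) ^ 2 := by
    have hc := Real.cos_two_mul' (Real.pi * t)
    have hp := Real.sin_sq_add_cos_sq (Real.pi * t)
    have h2pt : 2 * Real.pi * t = 2 * (Real.pi * t) := by ring
    rw [h2pt, Real.cos_two_mul' , Real.sin_two_mul]
    nlinarith [Real.sin_sq_add_cos_sq (Real.pi * t), sq_abs (Real.sin (Real.pi * t))]
  rw [h2, Real.sqrt_sq (by positivity)]


lemma e2pi_sub_one_lower {t : ℝ} (ht : |t| ≤ 1/2) : 4 * |t| ≤ norm (e2pi t - 1) := by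
  rw [e2pi_sub_one_abs]
  have hsin : Real.sin (Real.pi * |t|) = |Real.sin (Real.pi * t)| := by
    rcases abs_cases t with ⟨h, h0⟩ | ⟨h, h0⟩
    · rw [h, abs_of_nonneg]
      exact Real.sin_nonneg_of_nonneg_of_le_pi (by positivity)
        (by nlinarith [Real.pi_pos, h, ht])
    · rw [h]
      have : Real.sin (Real.pi * -t) = -Real.sin (Real.pi * t) := by
        rw [mul_neg, Real.sin_neg]
      rw [this, abs_of_nonpos]
      have h1 : 0 ≤ Real.sin (Real.pi * -t) :=
        Real.sin_nonneg_of_nonneg_of_le_pi (by nlinarith [Real.pi_pos])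
          (by rw [h] at ht; nlinarith [Real.pi_pos, ht])
      rw [this] at h1; linarith
  rw [← hsin]
  have hb : 2 / Real.pi * (Real.pi * |t|) ≤ Real.sin (Real.pi * |t|) :=
    Real.mul_le_sin (by positivity) (by nlinarith [Real.pi_pos, ht])
  have : 2 / Real.pi * (Real.pi * |t|) = 2 * |t| := by
    field_simp
  nlinarith [this ▸ hb]

lemma mem_boxZ {n : ℕ} {z : ℤ} : z ∈ boxZ n ↔ -((n:ℤ)/2) ≤ z ∧ z < (n:ℤ) - (n:ℤ)/2 :=
  Finset.mem_Ico

lemma boxZ_abs_div_le {n : ℕ} (hn : 1 ≤ n) {z : ℤ} (hz : z ∈ boxZ n) : |(z:ℝ)/n| ≤ 1/2 := by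
  rw [mem_boxZ] at hz
  have h1 : -(2*z) ≤ (n:ℤ) := by omega
  have h2 : 2*z ≤ (n:ℤ) := by omega
  have hn0 : (0:ℝ) < n := by exact_mod_cast hn
  rw [abs_div, abs_of_pos hn0, div_le_iff₀ hn0]
  have e1 : (-(2*z) : ℝ) ≤ (n:ℝ) := by exact_mod_cast h1
  have e2 : ((2*z) : ℝ) ≤ (n:ℝ) := by exact_mod_cast h2
  rw [abs_le]; constructor <;> push_cast at e1 e2 ⊢ <;> nlinarith

lemma sum_shift {d n : ℕ} (hn : 1 ≤ n) (h : (Fin d → ℤ) → ℂ)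
    (hper : ∀ (y : Fin d → ℤ) (j : Fin d), h (y + Pi.single j (n:ℤ)) = h y) (i : Fin d) :
    ∑ y ∈ boxZd d n, h (y + Pi.single i 1) = ∑ y ∈ boxZd d n, h y := by
  have hub : -((n:ℤ)/2) < (n:ℤ) - (n:ℤ)/2 := by omega
  refine Finset.sum_nbij'
    (fun y => Function.update y i (if y i + 1 < (n:ℤ) - (n:ℤ)/2 then y i + 1 else -((n:ℤ)/2)))
    (fun y => Function.update y i (if -((n:ℤ)/2) < y i then y i - 1 else (n:ℤ) - (n:ℤ)/2 - 1))
    ?_ ?_ ?_ ?_ ?_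
  · intro y hy
    rw [boxZd, Fintype.mem_piFinset] at hy ⊢
    intro j
    have hj := mem_boxZ.mp (hy j)
    have hi := mem_boxZ.mp (hy i)
    simp only [Function.update_apply, mem_boxZ]
    split_ifs <;> omega
  · intro y hy
    rw [boxZd, Fintype.mem_piFinset] at hy ⊢
    intro j
    have hj := mem_boxZ.mp (hy j)
    have hi := mem_boxZ.mp (hy i)
    simp only [Function.update_apply, mem_boxZ]
    split_ifs <;> omega
  · intro y hy
    rw [boxZd, Fintype.mem_piFinset] at hy
    have hyi := mem_boxZ.mp (hy i)
    funext j
    simp only [Function.update_apply]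
    split_ifs with h1 h2 h3 <;> first | omega | (subst h1; omega) | rfl
  · intro y hy
    rw [boxZd, Fintype.mem_piFinset] at hy
    have hyi := mem_boxZ.mp (hy i)
    funext j
    simp only [Function.update_apply]
    split_ifs with h1 h2 h3 <;> first | omega | (subst h1; omega) | rfl
  · intro y hy
    rw [boxZd, Fintype.mem_piFinset] at hy
    have hyi := mem_boxZ.mp (hy i)
    by_cases hc : y i + 1 < (n:ℤ) - (n:ℤ)/2
    · congr 1
      funext j
      simp only [Pi.add_apply, Function.update_apply, Pi.single_apply]
      split_ifs with h1 <;> [skip; skip] <;> subst_eqs <;> omega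
    · have key : y + Pi.single i (1:ℤ) =
          (Function.update y i (if y i + 1 < (n:ℤ) - (n:ℤ)/2 then y i + 1 else -((n:ℤ)/2))) + Pi.single i (n:ℤ) := by
        funext j
        simp only [Pi.add_apply, Function.update_apply, Pi.single_apply]
        split_ifs with h1 <;> [skip; skip] <;> subst_eqs <;> omega
      rw [key, hper]


section DiffSec
variable {d : ℕ}

def eVec (d : ℕ) (i : Fin d) : Fin d → ℝ := Pi.single i 1

def dirD (i : Fin d) (g : (Fin d → ℝ) → ℝ) : (Fin d → ℝ) → ℝ :=
  fun x => fderiv ℝ g x (eVec d i)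

def fdiff (i : Fin d) (h : ℝ) (g : (Fin d → ℝ) → ℝ) : (Fin d → ℝ) → ℝ :=
  fun x => g (x - h • eVec d i) - g x

lemma contDiff_dirD (i : Fin d) {g : (Fin d → ℝ) → ℝ} (hg : ContDiff ℝ (⊤ : ℕ∞) g) :
    ContDiff ℝ (⊤ : ℕ∞) (dirD i g) := by
  have h1 : ContDiff ℝ (⊤ : ℕ∞) (fderiv ℝ g) := hg.fderiv_right (by simp)
  exact (ContinuousLinearMap.apply ℝ ℝ (eVec d i)).contDiff.comp h1

lemma contDiff_fdiff (i : Fin d) (h : ℝ) {g : (Fin d → ℝ) → ℝ} (hg : ContDiff ℝ (⊤ : ℕ∞) g) :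
    ContDiff ℝ (⊤ : ℕ∞) (fdiff i h g) := by
  unfold fdiff
  exact (hg.comp (contDiff_id.sub contDiff_const)).sub hg

lemma fderiv_translate {g : (Fin d → ℝ) → ℝ} (hg : Differentiable ℝ g) (c x : Fin d → ℝ) :
    fderiv ℝ (fun y => g (y + c)) x = fderiv ℝ g (x + c) := by
  have h1 : HasFDerivAt (fun y : (Fin d → ℝ) => y + c) (ContinuousLinearMap.id ℝ _) x :=
    (hasFDerivAt_id x).add_const c
  have h2 := ((hg (x + c)).hasFDerivAt.comp x h1).fderiv
  simpa [Function.comp_def] using h2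

lemma dirD_translate (i : Fin d) {g : (Fin d → ℝ) → ℝ} (hg : Differentiable ℝ g)
    (c : Fin d → ℝ) : dirD i (fun y => g (y + c)) = fun x => dirD i g (x + c) := by
  funext x
  unfold dirD
  rw [fderiv_translate hg]

lemma dirD_fdiff_comm (i : Fin d) (h : ℝ) {g : (Fin d → ℝ) → ℝ} (hg : ContDiff ℝ (⊤ : ℕ∞) g) :
    dirD i (fdiff i h g) = fdiff i h (dirD i g) := by
  have hdg : Differentiable ℝ g := hg.differentiable (by simp)
  funext x
  set c : Fin d → ℝ := -(h • eVec d i) with hc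
  have e1 : fdiff i h g = fun y => g (y + c) - g y := by
    funext y; simp [fdiff, hc, sub_eq_add_neg]
  rw [e1]
  unfold dirD
  have hd1 : DifferentiableAt ℝ (fun y => g (y + c)) x :=
    (hdg.comp (differentiable_id.add_const c)) x
  rw [fderiv_fun_sub hd1 (hdg x)]
  simp only [ContinuousLinearMap.sub_apply]
  have := congrFun (dirD_translate i hdg c) x
  unfold dirD at this
  rw [this]
  simp [fdiff, hc, sub_eq_add_neg]

lemma fdiff_mvt (i : Fin d) (h : ℝ) {g : (Fin d → ℝ) → ℝ} (hg : ContDiff ℝ (⊤ : ℕ∞) g)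
    {C : ℝ} (hC : ∀ x, |dirD i g x| ≤ C) (x : Fin d → ℝ) :
    |fdiff i h g x| ≤ |h| * C := by
  set v : Fin d → ℝ := h • eVec d i with hv
  have hdg : Differentiable ℝ g := hg.differentiable (by simp)
  set φ : ℝ → ℝ := fun t => g (x - t • v) with hφ
  have hder : ∀ t : ℝ, HasDerivAt φ (-((fderiv ℝ g (x - t • v)) v)) t := by
    intro t
    have h1 : HasDerivAt (fun t : ℝ => x - t • v) (-v) t := by
      have := ((hasDerivAt_id t).smul_const v).const_sub x
      simpa using this
    have := (hdg (x - t • v)).hasFDerivAt.comp_hasDerivAt t h1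
    simpa [Function.comp_def] using this
  have key := norm_image_sub_le_of_norm_deriv_le_segment'
    (f := φ) (f' := fun t => -((fderiv ℝ g (x - t • v)) v)) (a := 0) (b := 1) (C := |h| * C)
    (fun t _ => (hder t).hasDerivWithinAt) ?_ 1 (by norm_num)
  · have e0 : φ 0 = g x := by simp [hφ]
    have e1 : φ 1 = g (x - v) := by simp [hφ]
    have e2 : |fdiff i h g x| = ‖φ 1 - φ 0‖ := by
      rw [e0, e1]; simp [fdiff, hv, Real.norm_eq_abs]
    rw [e2]
    simpa using key
  · intro t _
    have e3 : (fderiv ℝ g (x - t • v)) v = h * dirD i g (x - t • v) := by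
      rw [hv, ContinuousLinearMap.map_smul]
      simp [dirD, smul_eq_mul]
    simp only [norm_neg, Real.norm_eq_abs, e3, abs_mul]
    exact mul_le_mul_of_nonneg_left (hC _) (abs_nonneg h)

lemma dirD_iter_fdiff_comm (i : Fin d) (h : ℝ) : ∀ (K : ℕ) (g : (Fin d → ℝ) → ℝ),
    ContDiff ℝ (⊤ : ℕ∞) g → (dirD i)^[K] (fdiff i h g) = fdiff i h ((dirD i)^[K] g) := by
  intro K
  induction K with
  | zero => intro g _; simp
  | succ K ih =>
    intro g hg
    rw [Function.iterate_succ_apply, dirD_fdiff_comm i h hg, ih _ (contDiff_dirD i hg),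
      Function.iterate_succ_apply]

lemma contDiff_dirD_iter (i : Fin d) (K : ℕ) {g : (Fin d → ℝ) → ℝ} (hg : ContDiff ℝ (⊤ : ℕ∞) g) :
    ContDiff ℝ (⊤ : ℕ∞) ((dirD i)^[K] g) := by
  induction K with
  | zero => simpa
  | succ K ih => rw [Function.iterate_succ_apply']; exact contDiff_dirD i ih

lemma fdiff_iter_bound (i : Fin d) (h : ℝ) : ∀ (K : ℕ) (g : (Fin d → ℝ) → ℝ),
    ContDiff ℝ (⊤ : ℕ∞) g → ∀ (C : ℝ), (∀ x, |(dirD i)^[K] g x| ≤ C) →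
    ∀ x, |(fdiff i h)^[K] g x| ≤ |h| ^ K * C := by
  intro K
  induction K with
  | zero => intro g _ C hC x; simpa using hC x
  | succ K ih =>
    intro g hg C hC x
    rw [Function.iterate_succ_apply]
    have hC' : ∀ x, |(dirD i)^[K] (fdiff i h g) x| ≤ |h| * C := by
      intro x
      rw [dirD_iter_fdiff_comm i h K g hg]
      refine fdiff_mvt i h (contDiff_dirD_iter i K hg) ?_ x
      intro y
      have e : dirD i ((dirD i)^[K] g) y = (dirD i)^[K+1] g y := by
        rw [Function.iterate_succ_apply']
      rw [e]; exact hC y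
    have := ih (fdiff i h g) (contDiff_fdiff i h hg) (|h| * C) hC' x
    calc |(fdiff i h)^[K] (fdiff i h g) x| ≤ |h| ^ K * (|h| * C) := this
      _ = |h| ^ (K+1) * C := by ring

def Per (g : (Fin d → ℝ) → ℝ) : Prop :=
  ∀ (x : Fin d → ℝ) (z : Fin d → ℤ), g (x + fun i => (z i : ℝ)) = g x

lemma fderiv_translate' {g : (Fin d → ℝ) → ℝ} (hg : Differentiable ℝ g) (c x : Fin d → ℝ) :
    fderiv ℝ (fun y => g (y + c)) x = fderiv ℝ g (x + c) := by
  have h1 : HasFDerivAt (fun y : (Fin d → ℝ) => y + c) (ContinuousLinearMap.id ℝ _) x :=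
    (hasFDerivAt_id x).add_const c
  have h2 := ((hg (x + c)).hasFDerivAt.comp x h1).fderiv
  simpa [Function.comp_def] using h2

lemma per_dirD (i : Fin d) {g : (Fin d → ℝ) → ℝ} (hg : Differentiable ℝ g) (hper : Per g) :
    Per (dirD i g) := by
  intro x z
  unfold dirD
  have e1 : fderiv ℝ (fun y => g (y + fun i => (z i : ℝ))) x = fderiv ℝ g (x + fun i => (z i : ℝ)) :=
    fderiv_translate' hg _ x
  have e2 : (fun y => g (y + fun i => (z i : ℝ))) = g := by
    funext y; exact hper y z
  rw [← e1, e2]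

lemma per_dirD_iter (i : Fin d) (K : ℕ) {g : (Fin d → ℝ) → ℝ} (hg : ContDiff ℝ (⊤ : ℕ∞) g)
    (hper : Per g) (hKc : ∀ J, ContDiff ℝ (⊤ : ℕ∞) ((dirD i)^[J] g)) : Per ((dirD i)^[K] g) := by
  induction K with
  | zero => simpa
  | succ K ih =>
    rw [Function.iterate_succ_apply']
    exact per_dirD i ((hKc K).differentiable (by simp)) ih

lemma bounded_of_continuous_periodic {g : (Fin d → ℝ) → ℝ} (hg : Continuous g) (hper : Per g) :
    ∃ M : ℝ, 0 ≤ M ∧ ∀ x, |g x| ≤ M := by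
  obtain ⟨M, hM⟩ := (isCompact_Icc (a := (0 : Fin d → ℝ)) (b := 1)).exists_bound_of_continuousOn
    hg.continuousOn
  refine ⟨max M 0, le_max_right _ _, fun x => ?_⟩
  set z : Fin d → ℤ := fun i => ⌊x i⌋ with hz
  set y : Fin d → ℝ := fun i => x i - ⌊x i⌋ with hy
  have hyx : y + (fun i => ((z i : ℝ))) = x := by
    funext i; simp [hy, hz]
  have hgy : g x = g y := by rw [← hyx, hper y z]
  have hymem : y ∈ Set.Icc (0 : Fin d → ℝ) 1 := by
    constructor <;> intro i
    · simpa [hy] using (Int.fract_nonneg (x i))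
    · have h1 : Int.fract (x i) ≤ 1 := (Int.fract_lt_one (x i)).le
      rw [Int.fract] at h1
      simpa [hy] using h1
  rw [hgy]
  exact le_trans (hM y hymem) (le_max_left _ _)

end DiffSec

lemma setIntegral_translate (g : (Fin d → ℝ) → ℝ) (p q c : Fin d → ℝ) :
    ∫ x in Set.Icc (p + c) (q + c), g x = ∫ v in Set.Icc p q, g (v + c) := by
  have hmem : ∀ v : Fin d → ℝ, v + c ∈ Set.Icc (p + c) (q + c) ↔ v ∈ Set.Icc p q := by
    intro v
    constructor <;> rintro ⟨h1, h2⟩ <;> refine ⟨fun i => ?_, fun i => ?_⟩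
    · have := h1 i; simp only [Pi.add_apply] at this ⊢; linarith
    · have := h2 i; simp only [Pi.add_apply] at this ⊢; linarith
    · have := h1 i; simp only [Pi.add_apply] at this ⊢; linarith
    · have := h2 i; simp only [Pi.add_apply] at this ⊢; linarith
  rw [← integral_indicator measurableSet_Icc, ← integral_indicator measurableSet_Icc,
    ← integral_add_right_eq_self (fun v => (Set.Icc (p + c) (q + c)).indicator g v) c]
  congr 1
  funext v
  by_cases hv : v ∈ Set.Icc p q
  · rw [Set.indicator_of_mem ((hmem v).mpr hv), Set.indicator_of_mem hv]
  · rw [Set.indicator_of_notMem (fun hc => hv ((hmem v).mp hc)), Set.indicator_of_notMem hv]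

lemma vol_box {n : ℕ} (hn : 1 ≤ n) (w : Fin d → ℝ) :
    (volume (Set.Icc (fun i => w i - 1/(2*(n:ℝ))) (fun i => w i + 1/(2*(n:ℝ))))).toReal
      = (1/(n:ℝ))^d := by
  have hn0 : (0:ℝ) < n := by exact_mod_cast hn
  rw [Real.volume_Icc_pi]
  have h2 : (1:ℝ)/(2*(n:ℝ)) + 1/(2*(n:ℝ)) = 1/(n:ℝ) := by
    rw [← add_div]
    rw [div_eq_div_iff (by positivity) hn0.ne']
    ring
  have he : ∀ i : Fin d, (fun i => w i + 1/(2*(n:ℝ))) i - (fun i => w i - 1/(2*(n:ℝ))) i = 1/(n:ℝ) := by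
    intro i; simp only []; linarith [h2]
  simp_rw [he]
  rw [Finset.prod_const, Finset.card_univ, Fintype.card_fin, ENNReal.toReal_pow,
    ENNReal.toReal_ofReal (by positivity)]

lemma dotZ_add_single (y z : Fin d → ℤ) (j : Fin d) (a : ℤ) :
    dotZ (y + Pi.single j a) z = dotZ y z + (a : ℝ) * (z j : ℝ) := by
  unfold dotZ
  have e1 : ∀ k : Fin d, (((y + Pi.single j a : Fin d → ℤ) k : ℤ) : ℝ) * (z k : ℝ)
      = (y k : ℝ) * z k + (if k = j then (a:ℝ) * z k else 0) := by
    intro k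
    show (((y + Pi.single j a : Fin d → ℤ) k : ℤ) : ℝ) * (z k : ℝ) = _
    simp only [Pi.add_apply, Pi.single_apply]
    split_ifs <;> push_cast <;> ring
  rw [Finset.sum_congr rfl (fun k _ => e1 k), Finset.sum_add_distrib,
    Finset.sum_ite_eq' Finset.univ j (fun k => (a:ℝ) * (z k : ℝ))]
  simp

lemma tor_add_single {n : ℕ} (hn : 1 ≤ n) (y : Fin d → ℤ) (j : Fin d) (a : ℤ) :
    tor n (y + Pi.single j a) = tor n y + (((a:ℝ)/n) • eVec d j) := by
  have hn0 : ((n:ℝ)) ≠ 0 := by positivity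
  funext k
  simp only [tor, eVec, Pi.add_apply, Pi.smul_apply, Pi.single_apply, smul_eq_mul]
  split_ifs <;> push_cast <;> field_simp <;> ring

def Iball {d : ℕ} (f : (Fin d → ℝ) → ℝ) (n : ℕ) (w : Fin d → ℝ) : ℝ :=
  ∫ u in Set.Icc (fun i => w i - 1/(2*(n:ℝ))) (fun i => w i + 1/(2*(n:ℝ))), f u

-- assumed earlier lemmas (to be appended from p1/p3/p5)
lemma contDiff_fdiff_iter {d : ℕ} (i : Fin d) (h : ℝ) (k : ℕ) {g : (Fin d → ℝ) → ℝ}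
    (hg : ContDiff ℝ (⊤ : ℕ∞) g) : ContDiff ℝ (⊤ : ℕ∞) ((fdiff i h)^[k] g) := by
  induction k with
  | zero => simpa
  | succ k ih => rw [Function.iterate_succ_apply']; exact contDiff_fdiff i h ih

lemma sub_single_eq_add {d : ℕ} (y : Fin d → ℤ) (i : Fin d) :
    y - Pi.single i 1 = y + Pi.single i (-1 : ℤ) := by
  funext k
  simp only [Pi.sub_apply, Pi.add_apply, Pi.single_apply]
  split_ifs <;> ring

lemma Iball_translate {d n : ℕ} (f : (Fin d → ℝ) → ℝ) (w c : Fin d → ℝ) :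
    Iball f n (w + c) = ∫ v in Set.Icc (fun i => w i - 1/(2*(n:ℝ)))
      (fun i => w i + 1/(2*(n:ℝ))), f (v + c) := by
  unfold Iball
  have e1 : (fun i => (w + c) i - 1/(2*(n:ℝ))) = (fun i => w i - 1/(2*(n:ℝ))) + c := by
    funext i; simp only [Pi.add_apply]; ring
  have e2 : (fun i => (w + c) i + 1/(2*(n:ℝ))) = (fun i => w i + 1/(2*(n:ℝ))) + c := by
    funext i; simp only [Pi.add_apply]; ring
  rw [e1, e2, setIntegral_translate]

lemma boxZd_card {d n : ℕ} : (boxZd d n).card = n ^ d := by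
  rw [boxZd, Fintype.card_piFinset]
  have : (boxZ n).card = n := by
    rw [boxZ, Int.card_Ico]; omega
  simp [this]

theorem T_bound {d : ℕ} (f : (Fin d → ℝ) → ℝ) (hsm : ContDiff ℝ (⊤ : ℕ∞) f)
    (hper : ∀ (x : Fin d → ℝ) (z : Fin d → ℤ), f (x + fun i => (z i : ℝ)) = f x)
    {n : ℕ} (hn : 1 ≤ n) (z : Fin d → ℤ) (hzbox : ∀ j, z j ∈ boxZ n)
    (i0 : Fin d) (hz0 : z i0 ≠ 0) (K : ℕ) (M : ℝ)
    (hM : ∀ x, |(dirD i0)^[K] f x| ≤ M) :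
    norm (∑ y ∈ boxZd d n, ((Iball f n (tor n y)) : ℂ) * e2pi (-(dotZ y z)/n))
      ≤ M / (4 * |(z i0 : ℝ)|)^K := by
  have hn0 : (0:ℝ) < n := by exact_mod_cast hn
  set u : (Fin d → ℤ) → ℝ := fun y => Iball f n (tor n y) with hu
  set χ : (Fin d → ℤ) → ℂ := fun y => e2pi (-(dotZ y z)/n) with hχ
  set c : ℂ := e2pi (-((z i0 : ℝ))/n) with hc
  set e : Fin d → ℤ := Pi.single i0 1 with he
  set Dop : ((Fin d → ℤ) → ℝ) → ((Fin d → ℤ) → ℝ) := fun v y => v (y - e) - v y with hDop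
  -- periodicity of χ
  have hχ_per : ∀ (y : Fin d → ℤ) (j : Fin d), χ (y + Pi.single j (n:ℤ)) = χ y := by
    intro y j
    simp only [hχ]
    rw [dotZ_add_single]
    have harg : -(dotZ y z + (((n:ℤ)):ℝ) * (z j : ℝ))/(n:ℝ) = -(dotZ y z)/n + ((-(z j) : ℤ) : ℝ) := by
      push_cast; field_simp; ring
    rw [harg, e2pi_add, e2pi_int, mul_one]
  -- shift of χ
  have hχ_shift : ∀ (y : Fin d → ℤ), χ (y + e) = c * χ y := by
    intro y
    simp only [hχ, he, hc]
    rw [dotZ_add_single]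
    have harg : -(dotZ y z + (((1:ℤ)):ℝ) * (z i0 : ℝ))/(n:ℝ) = -(dotZ y z)/n + (-((z i0 : ℝ))/n) := by
      field_simp; ring
    rw [harg, e2pi_add]; ring
  -- periodicity of u
  have hu_per : ∀ (y : Fin d → ℤ) (j : Fin d), u (y + Pi.single j (n:ℤ)) = u y := by
    intro y j
    simp only [hu]
    rw [tor_add_single hn]
    have hcast : (((n:ℤ):ℝ)/(n:ℝ)) • eVec d j = (fun k => (((Pi.single j 1 : Fin d → ℤ)) k : ℝ)) := by
      funext k
      simp only [eVec, Pi.smul_apply, Pi.single_apply, smul_eq_mul]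
      split_ifs <;> push_cast <;> field_simp
    rw [hcast, Iball_translate]
    unfold Iball
    congr 1
    funext v
    exact hper v (Pi.single j 1)
  -- representation of iterated differences
  have hrep : ∀ k (y : Fin d → ℤ), Dop^[k] u y
      = ∫ v in Set.Icc (fun i => tor n y i - 1/(2*(n:ℝ))) (fun i => tor n y i + 1/(2*(n:ℝ))),
          ((fdiff i0 (1/(n:ℝ)))^[k] f) v := by
    intro k
    induction k with
    | zero => intro y; rfl
    | succ k ih =>
      intro y
      rw [Function.iterate_succ_apply']
      have hDy : Dop (Dop^[k] u) y = Dop^[k] u (y - e) - Dop^[k] u y := rfl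
      rw [hDy, ih, ih]
      set g := (fdiff i0 (1/(n:ℝ)))^[k] f with hg
      have hgc : Continuous g := (contDiff_fdiff_iter i0 _ k hsm).continuous
      have htor : tor n (y - e) = tor n y + ((- (1:ℝ)/n) • eVec d i0) := by
        rw [he, sub_single_eq_add, tor_add_single hn]
        norm_num
      have e3 := Iball_translate (n := n) g (tor n y) ((- (1:ℝ)/n) • eVec d i0)
      have e4 : (∫ v in Set.Icc (fun i => tor n (y - e) i - 1/(2*(n:ℝ)))
          (fun i => tor n (y - e) i + 1/(2*(n:ℝ))), g v)
          = ∫ v in Set.Icc (fun i => tor n y i - 1/(2*(n:ℝ)))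
            (fun i => tor n y i + 1/(2*(n:ℝ))), g (v + ((- (1:ℝ)/n) • eVec d i0)) := by
        rw [← e3, htor]; rfl
      rw [e4]
      rw [← integral_sub]
      · congr 1
        funext v
        rw [Function.iterate_succ_apply']
        show g (v + ((- (1:ℝ)/n) • eVec d i0)) - g v = g (v - (1/(n:ℝ)) • eVec d i0) - g v
        congr 2
        funext k'
        simp only [Pi.add_apply, Pi.sub_apply, Pi.smul_apply, smul_eq_mul]
        ring
      · exact (hgc.comp (continuous_id.add continuous_const)).integrableOn_Icc
      · exact hgc.integrableOn_Icc
  -- bound on iterated differences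
  have hDbound : ∀ y : Fin d → ℤ, |Dop^[K] u y| ≤ (1/(n:ℝ))^d * ((1/(n:ℝ))^K * M) := by
    intro y
    rw [hrep K y]
    have hfd : ∀ v, |((fdiff i0 (1/(n:ℝ)))^[K] f) v| ≤ (1/(n:ℝ))^K * M := by
      intro v
      have := fdiff_iter_bound i0 (1/(n:ℝ)) K f hsm M hM v
      rwa [abs_of_nonneg (by positivity : (0:ℝ) ≤ 1/(n:ℝ))] at this
    have hmeas := ((contDiff_fdiff_iter i0 (1/(n:ℝ)) K hsm).continuous).aestronglyMeasurable (μ := volume)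
    have hlt : volume (Set.Icc (fun i => tor n y i - 1/(2*(n:ℝ)))
        (fun i => tor n y i + 1/(2*(n:ℝ)))) < ⊤ := (isCompact_Icc).measure_lt_top
    have := norm_setIntegral_le_of_norm_le_const (μ := volume) (C := (1/(n:ℝ))^K * M) hlt
      (fun v _ => by rw [Real.norm_eq_abs]; exact hfd v)
    rw [Real.norm_eq_abs] at this
    calc |∫ v in _, ((fdiff i0 (1/(n:ℝ)))^[K] f) v| ≤ ((1/(n:ℝ))^K * M) *
        (volume (Set.Icc (fun i => tor n y i - 1/(2*(n:ℝ)))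
          (fun i => tor n y i + 1/(2*(n:ℝ))))).toReal := this
      _ = (1/(n:ℝ))^d * ((1/(n:ℝ))^K * M) := by rw [vol_box hn]; ring
  -- summation by parts identity
  have hDper : ∀ (v : (Fin d → ℤ) → ℝ), (∀ y j, v (y + Pi.single j (n:ℤ)) = v y) →
      (∀ y j, Dop v (y + Pi.single j (n:ℤ)) = Dop v y) := by
    intro v hv y j
    show v ((y + Pi.single j (n:ℤ)) - e) - v (y + Pi.single j (n:ℤ)) = v (y - e) - v y
    have : (y + Pi.single j (n:ℤ)) - e = (y - e) + Pi.single j (n:ℤ) := by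
      abel
    rw [this, hv, hv]
  have hDper_iter : ∀ k, ∀ y j, (Dop^[k] u) (y + Pi.single j (n:ℤ)) = (Dop^[k] u) y := by
    intro k
    induction k with
    | zero => exact hu_per
    | succ k ih =>
      intro y j
      rw [Function.iterate_succ_apply']
      exact hDper _ ih y j
  have hsbp_step : ∀ (v : (Fin d → ℤ) → ℝ), (∀ y j, v (y + Pi.single j (n:ℤ)) = v y) →
      ∑ y ∈ boxZd d n, ((Dop v y : ℝ) : ℂ) * χ y
        = (c - 1) * ∑ y ∈ boxZd d n, ((v y : ℝ) : ℂ) * χ y := by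
    intro v hv
    have hshift := sum_shift hn (fun y => ((v (y - e) : ℝ) : ℂ) * χ y) ?_ i0
    · have hlhs : ∑ y ∈ boxZd d n, ((v ((y + Pi.single i0 1) - e) : ℝ) : ℂ) * χ (y + Pi.single i0 1)
          = c * ∑ y ∈ boxZd d n, ((v y : ℝ) : ℂ) * χ y := by
        rw [Finset.mul_sum]
        refine Finset.sum_congr rfl (fun y _ => ?_)
        have hye : (y + Pi.single i0 1) - e = y := by rw [he]; abel
        rw [hye, hχ_shift y]; ring
      have : ∑ y ∈ boxZd d n, ((v (y - e) : ℝ) : ℂ) * χ y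
          = c * ∑ y ∈ boxZd d n, ((v y : ℝ) : ℂ) * χ y := by
        rw [← hlhs]; exact hshift.symm
      calc ∑ y ∈ boxZd d n, ((Dop v y : ℝ) : ℂ) * χ y
          = ∑ y ∈ boxZd d n, (((v (y - e) : ℝ) : ℂ) * χ y - ((v y : ℝ) : ℂ) * χ y) := by
            refine Finset.sum_congr rfl (fun y _ => ?_)
            show ((v (y - e) - v y : ℝ) : ℂ) * χ y = _
            push_cast; ring
        _ = (∑ y ∈ boxZd d n, ((v (y - e) : ℝ) : ℂ) * χ y) - ∑ y ∈ boxZd d n, ((v y : ℝ) : ℂ) * χ y := Finset.sum_sub_distrib _ _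
        _ = (c - 1) * ∑ y ∈ boxZd d n, ((v y : ℝ) : ℂ) * χ y := by rw [this]; ring
    · intro y j
      beta_reduce
      have : (y + Pi.single j (n:ℤ)) - e = (y - e) + Pi.single j (n:ℤ) := by abel
      rw [this, hv, hχ_per]
  have hsbp : ∀ k, (c - 1)^k * ∑ y ∈ boxZd d n, ((u y : ℝ) : ℂ) * χ y
      = ∑ y ∈ boxZd d n, ((Dop^[k] u y : ℝ) : ℂ) * χ y := by
    intro k
    induction k with
    | zero => simp
    | succ k ih =>
      rw [Function.iterate_succ_apply'] at *
      rw [hsbp_step (Dop^[k] u) (hDper_iter k)]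
      rw [← ih]; ring
  -- final combination
  have hcard : ((boxZd d n).card : ℝ) = (n : ℝ)^d := by
    rw [boxZd_card]; push_cast; ring
  have hS : norm (∑ y ∈ boxZd d n, ((Dop^[K] u y : ℝ) : ℂ) * χ y) ≤ (1/(n:ℝ))^K * M := by
    calc norm (∑ y ∈ boxZd d n, ((Dop^[K] u y : ℝ) : ℂ) * χ y)
        ≤ ∑ y ∈ boxZd d n, norm (((Dop^[K] u y : ℝ) : ℂ) * χ y) := by
          exact norm_sum_le _ _
      _ ≤ ∑ y ∈ boxZd d n, ((1/(n:ℝ))^d * ((1/(n:ℝ))^K * M)) := by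
          refine Finset.sum_le_sum (fun y _ => ?_)
          rw [norm_mul, Complex.norm_real, Real.norm_eq_abs, hχ]
          rw [e2pi_abs, mul_one]
          exact hDbound y
      _ = ((boxZd d n).card : ℝ) * ((1/(n:ℝ))^d * ((1/(n:ℝ))^K * M)) := by
          rw [Finset.sum_const, nsmul_eq_mul]
      _ = (1/(n:ℝ))^K * M := by
          rw [hcard, ← mul_assoc, ← mul_pow, mul_one_div_cancel hn0.ne', one_pow, one_mul]
  have habs : norm ((c-1)^K) * norm (∑ y ∈ boxZd d n, ((u y : ℝ) : ℂ) * χ y)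
      ≤ (1/(n:ℝ))^K * M := by
    rw [← norm_mul, hsbp K]; exact hS
  have hlow : 4 * |(z i0:ℝ)| / n ≤ norm (c - 1) := by
    have ht : |(-((z i0 : ℝ))/n)| ≤ 1/2 := by
      rw [neg_div, abs_neg]; exact boxZ_abs_div_le hn (hzbox i0)
    have := e2pi_sub_one_lower ht
    rw [neg_div, abs_neg, abs_div, abs_of_pos hn0] at this
    rw [show (-((z i0:ℝ)/(n:ℝ))) = (-(z i0:ℝ))/(n:ℝ) from (neg_div _ _).symm] at this
    calc 4 * |(z i0:ℝ)| / n = 4 * (|(z i0:ℝ)| / n) := by ring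
      _ ≤ norm (c - 1) := this
  have hz1 : (1:ℝ) ≤ |(z i0:ℝ)| := by
    have h1 : (1:ℤ) ≤ |z i0| := by
      rcases hz0.lt_or_gt with h | h
      · rw [abs_of_neg h]; omega
      · rw [abs_of_pos h]; omega
    exact_mod_cast h1
  have hpos : (0:ℝ) < 4 * |(z i0:ℝ)| / n := by positivity
  have hTabs := habs
  rw [norm_pow] at hTabs
  set T := norm (∑ y ∈ boxZd d n, ((u y : ℝ) : ℂ) * χ y) with hT
  have step1 : (4 * |(z i0:ℝ)| / n)^K * T ≤ (1/(n:ℝ))^K * M := by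
    calc (4 * |(z i0:ℝ)| / n)^K * T ≤ (norm (c-1))^K * T := by
          exact mul_le_mul_of_nonneg_right (pow_le_pow_left₀ hpos.le hlow K) (norm_nonneg _)
      _ ≤ (1/(n:ℝ))^K * M := hTabs
  have step2 : T ≤ ((1/(n:ℝ))^K * M) / (4 * |(z i0:ℝ)| / n)^K := by
    rw [le_div_iff₀ (by positivity)]
    calc T * (4 * |(z i0:ℝ)| / n)^K = (4 * |(z i0:ℝ)| / n)^K * T := by ring
      _ ≤ (1/(n:ℝ))^K * M := step1
  have step3 : ((1/(n:ℝ))^K * M) / (4 * |(z i0:ℝ)| / n)^K = M / (4 * |(z i0:ℝ)|)^K := by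
    have h1 : ((4:ℝ) * |(z i0:ℝ)|)^K ≠ 0 := by positivity
    have h2 : ((n:ℝ))^K ≠ 0 := by positivity
    rw [div_pow, div_pow, one_pow]
    rw [div_eq_div_iff (by positivity) (by positivity)]
    field_simp
  rw [step3] at step2
  exact step2

lemma sin_pi_lower {t : ℝ} (ht : |t| ≤ 1/2) : 2 * |t| ≤ |Real.sin (Real.pi * t)| := by
  have h1 := e2pi_sub_one_lower ht
  rw [e2pi_sub_one_abs] at h1
  linarith


lemma Rn_eq {d n : ℕ} (hn : 1 ≤ n) {f : (Fin d → ℝ) → ℝ} (hc : Continuous f) (w : Fin d → ℝ) :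
    Rn f n w = Iball f n w - f w * (1/(n:ℝ))^d := by
  unfold Rn Iball
  rw [integral_sub hc.integrableOn_Icc (integrableOn_const isCompact_Icc.measure_lt_top.ne)]
  rw [setIntegral_const, measureReal_def, vol_box hn w, smul_eq_mul]
  ring


/-- There is `C > 0` with `|k_n(x)| ≤ C n^{−d/α}` for all `n ≥ 1` and all `x ∈ ℤ_n^d`. -/
theorem kN_unif_bound (d : ℕ) (hd : 1 ≤ d) (α : ℝ) (hα1 : 0 < α) (hα2 : α ≤ 2)
    (f : (Fin d → ℝ) → ℝ) (hf : IsSmoothPeriodicMeanZero f) :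
    ∃ C : ℝ, 0 < C ∧ ∀ n : ℕ, 1 ≤ n → ∀ x ∈ boxZd d n,
      ‖kN f α n x‖ ≤ C * (n : ℝ) ^ (-(d : ℝ) / α) := by

  obtain ⟨hsm, hper, -⟩ := hf
  set K := 3 * d with hK
  -- uniform bound on K-th directional derivatives
  have hMi : ∀ i : Fin d, ∃ Mi : ℝ, 0 ≤ Mi ∧ ∀ x, |(dirD i)^[K] f x| ≤ Mi := fun i =>
    bounded_of_continuous_periodic (contDiff_dirD_iter i K hsm).continuous
      (per_dirD_iter i K hsm hper (fun J => contDiff_dirD_iter i J hsm))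
  choose Mi hMi0 hMiB using hMi
  set M := ∑ i, Mi i with hM
  have hM0 : 0 ≤ M := Finset.sum_nonneg (fun i _ => hMi0 i)
  have hMB : ∀ (i : Fin d) x, |(dirD i)^[K] f x| ≤ M := fun i x =>
    (hMiB i x).trans (Finset.single_le_sum (fun j _ => hMi0 j) (Finset.mem_univ i))
  -- summable majorant
  set g : ℤ → ℝ := fun m => (((1:ℝ) + |(m:ℝ)|)^3)⁻¹ with hg
  have hg0 : ∀ m, 0 ≤ g m := fun m => by positivity
  have hgsum : Summable g := by
    have hnat : Summable (fun k : ℕ => g (k : ℤ)) := by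
      have h1 : Summable (fun k : ℕ => 1 / ((k:ℝ))^3) :=
        Real.summable_one_div_nat_pow.mpr (by norm_num)
      have h2 : Summable ((fun k : ℕ => 1 / ((k:ℝ))^3) ∘ (fun k : ℕ => k + 1)) :=
        h1.comp_injective (add_left_injective 1)
      refine h2.congr (fun k => ?_)
      simp only [Function.comp_apply, hg]
      push_cast
      rw [one_div, abs_of_nonneg (by positivity : (0:ℝ) ≤ (k:ℝ))]
      ring_nf
    have hneg : Summable (fun k : ℕ => g (-(k : ℤ))) := by
      refine hnat.congr (fun k => ?_)
      simp [hg]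
    exact Summable.of_nat_of_neg hnat hneg
  set Bt := ∑' m, g m with hBt
  have hBt0 : 0 ≤ Bt := tsum_nonneg hg0
  have hBfin : ∀ s : Finset ℤ, ∑ m ∈ s, g m ≤ Bt := fun s => Summable.sum_le_tsum s (fun m _ => hg0 m) hgsum
  set CC : ℝ := M * 8^d / 4^K * Bt^d with hCC
  have hCC0 : 0 ≤ CC := by
    apply mul_nonneg (div_nonneg (mul_nonneg hM0 (by positivity)) (by positivity))
    exact pow_nonneg hBt0 d
  refine ⟨Real.pi^2/4 * CC + 1, by have h9 : (0:ℝ) ≤ Real.pi^2/4*CC := mul_nonneg (by positivity) hCC0; linarith, ?_⟩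
  intro n hn x _
  have hn0 : (0:ℝ) < n := by exact_mod_cast hn
  have hrn : (0:ℝ) < (n:ℝ) ^ (-(d:ℝ)/α) := Real.rpow_pos_of_pos hn0 _
  set c1 : ℝ := cN d α n / (n:ℝ)^d with hc1
  have hc1nn : 0 ≤ c1 := by
    apply div_nonneg _ (by positivity)
    unfold cN
    positivity
  set inn : (Fin d → ℤ) → ℂ := fun y => ∑ z ∈ (boxZd d n).erase 0,
    e2pi (-(dotZ x z + dotZ y z) / n) / ((lambdaN d n z : ℝ) : ℂ) with hinn
  -- Step 1 : combine lN and cnF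
  have hkN : kN f α n x = -((c1 : ℝ) : ℂ) * ∑ y ∈ boxZd d n,
      ((Iball f n (tor n y) : ℝ) : ℂ) * inn y := by
    have h1 : kN f α n x = -((cN d α n / (n : ℝ) ^ (2 * d) : ℝ) : ℂ) * ∑ y ∈ boxZd d n,
        ((f (tor n y) : ℝ) : ℂ) * inn y
        + -(((c1 : ℝ)) : ℂ) * ∑ y ∈ boxZd d n, ((Rn f n (tor n y) : ℝ) : ℂ) * inn y := rfl
    rw [h1, Finset.mul_sum, Finset.mul_sum, ← Finset.sum_add_distrib, Finset.mul_sum]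
    refine Finset.sum_congr rfl (fun y _ => ?_)
    have hreal : cN d α n / (n:ℝ)^(2*d) * f (tor n y) + c1 * Rn f n (tor n y)
        = c1 * Iball f n (tor n y) := by
      rw [Rn_eq hn hsm.continuous]
      have hp : (n:ℝ)^(2*d) = (n:ℝ)^d * (n:ℝ)^d := by rw [two_mul, pow_add]
      rw [hc1, hp, div_pow, one_pow]
      have hnd : ((n:ℝ))^d ≠ 0 := by positivity
      field_simp
      ring
    have hstep : (-((cN d α n / (n:ℝ)^(2*d) : ℝ) : ℂ)) * ((f (tor n y) : ℝ) : ℂ)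
        + (-((c1 : ℝ) : ℂ)) * ((Rn f n (tor n y) : ℝ) : ℂ)
        = (-((c1 : ℝ) : ℂ)) * ((Iball f n (tor n y) : ℝ) : ℂ) := by
      have hcast := congrArg (fun r : ℝ => (r : ℂ)) hreal
      push_cast at hcast ⊢
      linear_combination -hcast
    calc -((cN d α n / (n:ℝ)^(2*d) : ℝ) : ℂ) * (((f (tor n y) : ℝ) : ℂ) * inn y)
          + -((c1 : ℝ) : ℂ) * (((Rn f n (tor n y) : ℝ) : ℂ) * inn y)
        = ((-((cN d α n / (n:ℝ)^(2*d) : ℝ) : ℂ)) * ((f (tor n y) : ℝ) : ℂ)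
            + (-((c1 : ℝ) : ℂ)) * ((Rn f n (tor n y) : ℝ) : ℂ)) * inn y := by ring
      _ = (-((c1 : ℝ) : ℂ)) * (((Iball f n (tor n y) : ℝ) : ℂ) * inn y) := by rw [hstep]; ring
  -- Step 2 : swap sums
  set T : (Fin d → ℤ) → ℂ := fun z => ∑ y ∈ boxZd d n,
    ((Iball f n (tor n y) : ℝ) : ℂ) * e2pi (-(dotZ y z)/n) with hT
  have hswap : (∑ y ∈ boxZd d n, ((Iball f n (tor n y) : ℝ) : ℂ) * inn y)
      = ∑ z ∈ (boxZd d n).erase 0,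
          (e2pi (-(dotZ x z)/n) / ((lambdaN d n z : ℝ) : ℂ)) * T z := by
    rw [hinn]
    simp_rw [Finset.mul_sum]
    rw [Finset.sum_comm]
    refine Finset.sum_congr rfl (fun z _ => ?_)
    rw [hT, Finset.mul_sum]
    refine Finset.sum_congr rfl (fun y _ => ?_)
    have harg : -(dotZ x z + dotZ y z)/(n:ℝ) = -(dotZ x z)/n + -(dotZ y z)/n := by ring
    rw [harg, e2pi_add]
    ring
  -- per-z bound
  have hperz : ∀ z ∈ (boxZd d n).erase 0,
      norm ((e2pi (-(dotZ x z)/n) / ((lambdaN d n z : ℝ) : ℂ)) * T z)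
        ≤ ((n:ℝ)^2/16 * (M * 8^d / 4^K)) * ∏ j, g (z j) := by
    intro z hz
    obtain ⟨hzne, hzbox⟩ := Finset.mem_erase.mp hz
    have hzbox' : ∀ j, z j ∈ boxZ n := Fintype.mem_piFinset.mp hzbox
    obtain ⟨i0, -, hmax⟩ := Finset.exists_max_image Finset.univ (fun j => |z j|)
      (Finset.univ_nonempty_iff.mpr ⟨⟨0, hd⟩⟩)
    have hmax' : ∀ j, |z j| ≤ |z i0| := fun j => hmax j (Finset.mem_univ j)
    have hz0 : z i0 ≠ 0 := by
      intro h0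
      apply hzne
      funext j
      have := hmax' j
      rw [h0] at this
      simpa using (abs_nonpos_iff.mp (by simpa using this))
    have hzi1 : (1:ℝ) ≤ |(z i0 : ℝ)| := by
      have h1 : (1:ℤ) ≤ |z i0| := by
        rcases hz0.lt_or_gt with h | h
        · rw [abs_of_neg h]; omega
        · rw [abs_of_pos h]; omega
      exact_mod_cast h1
    -- T bound
    have hTb := T_bound f hsm hper hn z hzbox' i0 hz0 K M (hMB i0)
    -- lambda bound
    have hlam : (16:ℝ)/(n:ℝ)^2 ≤ |lambdaN d n z| := by
      have hsin : (2 * (|(z i0 : ℝ)|/n))^2 ≤ Real.sin (Real.pi * (z i0 : ℝ) / n)^2 := by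
        have ht : |(z i0 : ℝ)/n| ≤ 1/2 := boxZ_abs_div_le hn (hzbox' i0)
        have := sin_pi_lower ht
        rw [abs_div, abs_of_pos hn0] at this
        have harg2 : Real.pi * (z i0 : ℝ) / n = Real.pi * ((z i0 : ℝ)/n) := by ring
        rw [harg2]
        calc (2 * (|(z i0 : ℝ)|/n))^2 ≤ |Real.sin (Real.pi * ((z i0 : ℝ)/n))|^2 := by
              apply pow_le_pow_left₀ (by positivity) this
          _ = Real.sin (Real.pi * ((z i0 : ℝ)/n))^2 := sq_abs _
      have hterm : (2/(n:ℝ))^2 ≤ Real.sin (Real.pi * (z i0 : ℝ) / n)^2 := by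
        refine le_trans ?_ hsin
        have : (2:ℝ)/n ≤ 2 * (|(z i0 : ℝ)|/n) := by
          rw [div_le_iff₀ hn0]
          have := hzi1
          field_simp
          nlinarith
        calc ((2:ℝ)/n)^2 ≤ (2 * (|(z i0 : ℝ)|/n))^2 := by
              apply pow_le_pow_left₀ (by positivity) this
          _ = _ := rfl
      have hsum : Real.sin (Real.pi * (z i0 : ℝ) / n)^2
          ≤ ∑ i, Real.sin (Real.pi * (z i : ℝ) / n)^2 :=
        Finset.single_le_sum (f := fun i => Real.sin (Real.pi * (z i : ℝ) / n)^2)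
          (fun i _ => sq_nonneg _) (Finset.mem_univ i0)
      have hS0 : (0:ℝ) ≤ ∑ i, Real.sin (Real.pi * (z i : ℝ) / n)^2 :=
        Finset.sum_nonneg (fun i _ => sq_nonneg _)
      have habs : |lambdaN d n z| = 4 * ∑ i, Real.sin (Real.pi * (z i : ℝ) / n)^2 := by
        unfold lambdaN
        rw [abs_of_nonpos (by nlinarith :
          (-4:ℝ) * (∑ i, Real.sin (Real.pi * (z i : ℝ) / n)^2) ≤ 0)]
        ring
      rw [habs]
      have h22 : ((2:ℝ)/n)^2 = 4/(n:ℝ)^2 := by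
        rw [div_pow]; norm_num
      have h3 : 4/(n:ℝ)^2 ≤ ∑ i, Real.sin (Real.pi * (z i : ℝ) / n)^2 := by
        rw [← h22]; exact le_trans hterm hsum
      calc (16:ℝ)/(n:ℝ)^2 = 4*(4/(n:ℝ)^2) := by ring
        _ ≤ 4 * ∑ i, Real.sin (Real.pi * (z i : ℝ) / n)^2 := by linarith
    have hdiv : norm (e2pi (-(dotZ x z)/n) / ((lambdaN d n z : ℝ) : ℂ)) ≤ (n:ℝ)^2/16 := by
      rw [norm_div, e2pi_abs, Complex.norm_real, Real.norm_eq_abs]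
      have hpos : (0:ℝ) < 16/(n:ℝ)^2 := by positivity
      rw [div_le_iff₀ (lt_of_lt_of_le hpos hlam)]
      have h1 : ((n:ℝ)^2/16) * (16/(n:ℝ)^2) = 1 := by field_simp
      calc (1:ℝ) = (n:ℝ)^2/16 * (16/(n:ℝ)^2) := h1.symm
        _ ≤ (n:ℝ)^2/16 * |lambdaN d n z| := mul_le_mul_of_nonneg_left hlam (by positivity)
    -- product bound
    have hprod : M / (4 * |(z i0 : ℝ)|)^K ≤ (M * 8^d / 4^K) * ∏ j, g (z j) := by
      set P : ℝ := ∏ j, ((1:ℝ) + |(z j : ℝ)|) with hP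
      have hP0 : 0 < P := Finset.prod_pos (fun j _ => by positivity)
      have hPle : P ≤ (2 * |(z i0 : ℝ)|)^d := by
        calc P ≤ ∏ j : Fin d, (2 * |(z i0 : ℝ)|) := by
              apply Finset.prod_le_prod (fun j _ => by positivity)
              intro j _
              have : |(z j : ℝ)| ≤ |(z i0 : ℝ)| := by exact_mod_cast hmax' j
              linarith
          _ = (2 * |(z i0 : ℝ)|)^d := by rw [Finset.prod_const, Finset.card_univ, Fintype.card_fin]
      have hgP : ∏ j, g (z j) = (P^3)⁻¹ := by
        rw [hg, hP]
        rw [← Finset.prod_pow]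
        rw [← Finset.prod_inv_distrib]
      have hP3 : P^3 ≤ 8^d * |(z i0 : ℝ)|^K := by
        have h1 : P^3 ≤ ((2 * |(z i0 : ℝ)|)^d)^3 := pow_le_pow_left₀ hP0.le hPle 3
        have h2 : ((2 * |(z i0 : ℝ)|)^d)^3 = 8^d * |(z i0 : ℝ)|^K := by
          rw [← pow_mul, mul_pow, hK]
          rw [show d*3 = 3*d from mul_comm d 3, pow_mul, pow_mul]
          norm_num
        linarith
      rw [hgP]
      calc M / (4 * |(z i0 : ℝ)|)^K = (M * 8^d / 4^K) * ((8:ℝ)^d * |(z i0 : ℝ)|^K)⁻¹ := by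
            rw [mul_pow]
            have h8 : ((8:ℝ))^d ≠ 0 := by positivity
            have h4 : ((4:ℝ))^K ≠ 0 := by positivity
            have hzK : (|(z i0 : ℝ)|)^K ≠ 0 := by positivity
            field_simp
        _ ≤ (M * 8^d / 4^K) * (P^3)⁻¹ := by
            apply mul_le_mul_of_nonneg_left (inv_anti₀ (by positivity) hP3)
            exact div_nonneg (mul_nonneg hM0 (by positivity)) (by positivity)
    calc norm ((e2pi (-(dotZ x z)/n) / ((lambdaN d n z : ℝ) : ℂ)) * T z)
        = norm (e2pi (-(dotZ x z)/n) / ((lambdaN d n z : ℝ) : ℂ)) * norm (T z) := norm_mul _ _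
      _ ≤ ((n:ℝ)^2/16) * (M / (4 * |(z i0 : ℝ)|)^K) := by
          apply mul_le_mul hdiv hTb (norm_nonneg _) (by positivity)
      _ ≤ ((n:ℝ)^2/16) * ((M * 8^d / 4^K) * ∏ j, g (z j)) := by
          apply mul_le_mul_of_nonneg_left hprod (by positivity)
      _ = ((n:ℝ)^2/16 * (M * 8^d / 4^K)) * ∏ j, g (z j) := by ring
  -- sum the per-z bounds
  have hseries : (∑ z ∈ (boxZd d n).erase 0, ∏ j, g (z j)) ≤ Bt^d := by
    calc (∑ z ∈ (boxZd d n).erase 0, ∏ j, g (z j))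
        ≤ ∑ z ∈ boxZd d n, ∏ j, g (z j) := by
          apply Finset.sum_le_sum_of_subset_of_nonneg (Finset.erase_subset _ _)
          intro z _ _
          exact Finset.prod_nonneg (fun j _ => hg0 _)
      _ = ∏ _j : Fin d, ∑ m ∈ boxZ n, g m := by
          rw [Finset.prod_univ_sum]
          rfl
      _ = (∑ m ∈ boxZ n, g m)^d := by rw [Finset.prod_const, Finset.card_univ, Fintype.card_fin]
      _ ≤ Bt^d := by
          apply pow_le_pow_left₀ (Finset.sum_nonneg (fun m _ => hg0 m)) (hBfin _)
  -- final chain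
  have hfinal : norm (kN f α n x) ≤ c1 * (((n:ℝ)^2/16 * (M * 8^d / 4^K)) * Bt^d) := by
    rw [hkN, norm_mul, norm_neg, Complex.norm_real, Real.norm_eq_abs, abs_of_nonneg hc1nn, hswap]
    apply mul_le_mul_of_nonneg_left _ hc1nn
    calc norm (∑ z ∈ (boxZd d n).erase 0,
            (e2pi (-(dotZ x z)/n) / ((lambdaN d n z : ℝ) : ℂ)) * T z)
        ≤ ∑ z ∈ (boxZd d n).erase 0,
            norm ((e2pi (-(dotZ x z)/n) / ((lambdaN d n z : ℝ) : ℂ)) * T z) :=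
          norm_sum_le _ _
      _ ≤ ∑ z ∈ (boxZd d n).erase 0, ((n:ℝ)^2/16 * (M * 8^d / 4^K)) * ∏ j, g (z j) :=
          Finset.sum_le_sum hperz
      _ = ((n:ℝ)^2/16 * (M * 8^d / 4^K)) * ∑ z ∈ (boxZd d n).erase 0, ∏ j, g (z j) := by
          rw [Finset.mul_sum]
      _ ≤ ((n:ℝ)^2/16 * (M * 8^d / 4^K)) * Bt^d := by
          apply mul_le_mul_of_nonneg_left hseries
          exact mul_nonneg (by positivity) (div_nonneg (mul_nonneg hM0 (by positivity)) (by positivity))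
  -- rpow arithmetic
  have hrw : c1 * ((n:ℝ)^2) = 4 * Real.pi^2 * (n:ℝ)^(-(d:ℝ)/α) := by
    have e2 : ((n:ℝ)^(2:ℕ) : ℝ) = (n:ℝ)^((2:ℝ)) := by
      rw [show ((2:ℝ)) = ((2:ℕ):ℝ) by norm_num, Real.rpow_natCast]
    have ed : ((n:ℝ)^d : ℝ) = (n:ℝ)^((d:ℝ)) := (Real.rpow_natCast _ d).symm
    have key : (n:ℝ)^((d:ℝ) - (d:ℝ)/α - 2) * (n:ℝ)^((2:ℝ)) / (n:ℝ)^((d:ℝ))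
        = (n:ℝ)^(-(d:ℝ)/α) := by
      rw [← Real.rpow_add hn0, ← Real.rpow_sub hn0]
      congr 1
      ring
    calc c1 * ((n:ℝ)^2)
        = 4*Real.pi^2 * ((n:ℝ)^((d:ℝ) - (d:ℝ)/α - 2) * (n:ℝ)^((2:ℝ)) / (n:ℝ)^((d:ℝ))) := by
          rw [hc1]; unfold cN; rw [e2, ed]; ring
      _ = 4 * Real.pi^2 * (n:ℝ)^(-(d:ℝ)/α) := by rw [key]
  have hfinal2 : c1 * (((n:ℝ)^2/16 * (M * 8^d / 4^K)) * Bt^d)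
      = Real.pi^2/4 * CC * (n:ℝ)^(-(d:ℝ)/α) := by
    have : c1 * (((n:ℝ)^2/16 * (M * 8^d / 4^K)) * Bt^d)
        = (c1 * (n:ℝ)^2) * ((M * 8^d / 4^K) * Bt^d) / 16 := by ring
    rw [this, hrw, hCC]
    ring
  calc norm (kN f α n x) ≤ c1 * (((n:ℝ)^2/16 * (M * 8^d / 4^K)) * Bt^d) := hfinal
    _ = Real.pi^2/4 * CC * (n:ℝ)^(-(d:ℝ)/α) := hfinal2
    _ ≤ (Real.pi^2/4 * CC + 1) * (n:ℝ)^(-(d:ℝ)/α) := by nlinarith [hrn]
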